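/- Let V_1, ..., V_n be distinct coordinates of I, let j ∈ {1, ..., n}, let U_1, ..., U_m be distinct coordinates of I disjoint from {V_1, ..., V_n}, and let D ⊆ I be disjoint from {V_1, ..., V_j, U_1, ..., U_m}. For each i let C_i ⊆ I with V_i ∉ C_i and for each k let E_k ⊆ I with U_k ∉ E_k. Assume: (i) V_j ∉ C_i for every i > j; (ii) for every assignment ω ∈ Ω, (∏_{k=1}^m P(U_k = ω_{U_k} | E_k = ω|_{E_k})) · (∏_{i=1}^j P(V_i = ω_{V_i} | C_i = ω|_{C_i})) = P({V_1, ..., V_j, U_1, ..., U_m} = ω | D = ω|_D); (iii) V_j ⫫ U_k | (E_k \ {V_j}) for every k; and (iv) there is a strict total order ≺ on the set Q = {V_1, ..., V_j} ∪ {U_1, ..., U_m} whose restriction to the V's is V_j ≺ V_{j-1} ≺ ⋯ ≺ V_1, in which V_j is the minimum of Q, and such that C_i ⊆ {q ∈ Q : q ≺ V_i} ∪ D for every i ≤ j and E_k ⊆ {q ∈ Q : q ≺ U_k} ∪ D for every k. Then there exist sets D_1, ..., D_{j-1} ⊆ (({V_1, ..., V_{j-1}} ∪ {U_1, ..., U_m}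 ∪ D)) with V_i ∉ D_i and V_j ∉ D_i for each i, such that for every assignment ω ∈ Ω: ∑_{v ∈ F_{V_j}} ∏_{i=1}^n P(V_i | C_i) evaluated at ω with coordinate V_j set to v equals (∏_{i=j+1}^n P(V_i = ω_{V_i} | C_i = ω|_{C_i})) · (∏_{i=1}^{j-1} P(V_i = ω_{V_i} | D_i = ω|_{D_i})); i.e. the summed expression is again a product of elementary conditional probability terms, none of which involves the coordinate V_j. -/

import Mathlib

open Finset

/-- Marginal probability `P(S = ω|_S)` of a strictly positive pmf `P` on a finite
product: the sum of `P ω'` over all assignments `ω'` agreeing with `ω` on `S`. -/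
noncomputable def marg {I : Type} [Fintype I] [DecidableEq I] {F : I → Type}
    [∀ i, Fintype (F i)] [∀ i, DecidableEq (F i)]
    (P : (∀ i, F i) → ℝ) (S : Finset I) (ω : ∀ i, F i) : ℝ :=
  ∑ ω' : ∀ i, F i, if ∀ i ∈ S, ω' i = ω i then P ω' else 0

/-- Elementary conditional probability `P(T = ω|_T | S = ω|_S)`. -/
noncomputable def condP {I : Type} [Fintype I] [DecidableEq I] {F : I → Type}
    [∀ i, Fintype (F i)] [∀ i, DecidableEq (F i)]
    (P : (∀ i, F i) → ℝ) (T S : Finset I) (ω : ∀ i, F i) : ℝ :=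
  marg P (S ∪ T) ω / marg P S ω

/-- Conditional independence of coordinates `a` and `b` given the set `S`. -/
def condIndep {I : Type} [Fintype I] [DecidableEq I] {F : I → Type}
    [∀ i, Fintype (F i)] [∀ i, DecidableEq (F i)]
    (P : (∀ i, F i) → ℝ) (a b : I) (S : Finset I) : Prop :=
  ∀ ω, condP P {a, b} S ω = condP P {a} S ω * condP P {b} S ω


attribute [local instance] Classical.propDecidable

section helpers
variable {I : Type} [Fintype I] [DecidableEq I] {F : I → Type}
    [∀ i, Fintype (F i)] [∀ i, DecidableEq (F i)]
    (P : (∀ i, F i) → ℝ)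

theorem marg_pos (hpos : ∀ ω, 0 < P ω) (S : Finset I) (ω : ∀ i, F i) : 0 < marg P S ω := by
  unfold marg
  have : ∀ ω' ∈ (univ : Finset (∀ i, F i)),
      0 ≤ if ∀ i ∈ S, ω' i = ω i then P ω' else 0 := by
    intro ω' _
    split <;> [exact (hpos ω').le; rfl]
  refine Finset.sum_pos' this ⟨ω, mem_univ ω, ?_⟩
  simpa using hpos ω

theorem marg_congr {S : Finset I} {ω ω' : ∀ i, F i} (h : ∀ i ∈ S, ω i = ω' i) :
    marg P S ω = marg P S ω' := by
  unfold marg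
  refine Finset.sum_congr rfl fun x _ => ?_
  congr 1
  simp only [eq_iff_iff]
  constructor <;> intro hh i hi
  · rw [← h i hi]; exact hh i hi
  · rw [h i hi]; exact hh i hi

theorem marg_update {S : Finset I} {a : I} (ha : a ∉ S) (ω : ∀ i, F i) (w : F a) :
    marg P S (Function.update ω a w) = marg P S ω := by
  refine marg_congr P fun i hi => ?_
  exact (Function.update_of_ne (by rintro rfl; exact ha hi) _ _)

theorem condP_update {S T : Finset I} {a : I} (haS : a ∉ S) (haT : a ∉ T)
    (ω : ∀ i, F i) (w : F a) :
    condP P T S (Function.update ω a w) = condP P T S ω := by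
  unfold condP
  rw [marg_update P (by simp [haS, haT]) , marg_update P haS]

theorem condP_pos (hpos : ∀ ω, 0 < P ω) (T S : Finset I) (ω : ∀ i, F i) : 0 < condP P T S ω :=
  div_pos (marg_pos P hpos _ ω) (marg_pos P hpos _ ω)

theorem sum_marg {S : Finset I} {a : I} (ha : a ∉ S) (ω : ∀ i, F i) :
    ∑ w : F a, marg P (insert a S) (Function.update ω a w) = marg P S ω := by
  unfold marg
  rw [Finset.sum_comm]
  refine Finset.sum_congr rfl fun ω' _ => ?_
  by_cases h : ∀ i ∈ S, ω' i = ω i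
  · have : ∀ w : F a, (∀ i ∈ insert a S, ω' i = Function.update ω a w i) ↔ ω' a = w := by
      intro w
      constructor
      · intro hh
        have := hh a (mem_insert_self a S)
        simpa using this
      · intro hh i hi
        rcases mem_insert.1 hi with rfl | hi2
        · simpa using hh
        · rw [Function.update_of_ne (by rintro rfl; exact ha hi2)]
          exact h i hi2
    simp only [this]
    rw [Finset.sum_eq_single (ω' a)] <;> simp +contextual [h, eq_comm]
  · have : ∀ w : F a, ¬ (∀ i ∈ insert a S, ω' i = Function.update ω a w i) := by
      intro w hh
      refine h fun i hi => ?_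
      have h2 := hh i (mem_insert_of_mem hi)
      rwa [Function.update_of_ne (by rintro rfl; exact ha hi)] at h2
    rw [if_neg h]
    exact Finset.sum_eq_zero fun w _ => if_neg (this w)

theorem sum_condP_one (hpos : ∀ ω, 0 < P ω) {S : Finset I} {a : I} (ha : a ∉ S) (ω : ∀ i, F i) :
    ∑ w : F a, condP P {a} S (Function.update ω a w) = 1 := by
  unfold condP
  have h1 : S ∪ {a} = insert a S := by rw [union_comm]; rfl
  simp only [h1, marg_update P ha]
  rw [← Finset.sum_div, sum_marg P ha, div_self (marg_pos P hpos S ω).ne']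

theorem condP_drop (hpos : ∀ ω, 0 < P ω) {S : Finset I} {a b : I} (hind : condIndep P a b S)
    (hab : a ≠ b) (ω : ∀ i, F i) :
    condP P {b} (insert a S) ω = condP P {b} S ω := by
  have h := hind ω
  unfold condP at h ⊢
  have e1 : S ∪ {a, b} = (insert a S) ∪ {b} := by
    ext x; simp [or_comm, or_assoc, or_left_comm]
  have e2 : S ∪ {a} = insert a S := by rw [union_comm]; rfl
  rw [e1, e2] at h
  have hm : marg P S ω ≠ 0 := (marg_pos P hpos S ω).ne'
  have hm2 : marg P (insert a S) ω ≠ 0 := (marg_pos P hpos _ ω).ne'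
  field_simp at h ⊢
  apply mul_right_cancel₀ hm
  linear_combination (marg P S ω) * h

theorem marg_insert_eq (hpos : ∀ ω, 0 < P ω) (a : I) (S : Finset I) (ω : ∀ i, F i) :
    marg P (insert a S) ω = condP P {a} S ω * marg P S ω := by
  unfold condP
  rw [div_mul_cancel₀ _ (marg_pos P hpos S ω).ne']
  congr 1
  rw [union_comm]; rfl

end helpers

section ord
variable {I : Type} [DecidableEq I] (Q : Finset I) (r : I → I → Prop)

theorem height_lt (hirr : ∀ q ∈ Q, ¬ r q q)
    (htr : ∀ a ∈ Q, ∀ b ∈ Q, ∀ c ∈ Q, r a b → r b c → r a c)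
    (x y : I) (hx : x ∈ Q) (hy : y ∈ Q) (hxy : r x y) :
    (Q.filter (fun z => r z x)).card < (Q.filter (fun z => r z y)).card := by
  apply Finset.card_lt_card
  rw [Finset.ssubset_iff_of_subset]
  · exact ⟨x, by simp [hx, hxy], by simp [hirr x hx]⟩
  · intro z hz
    rw [mem_filter] at hz ⊢
    exact ⟨hz.1, htr z hz.1 x hx y hy hz.2 hxy⟩

theorem exists_rmax (hirr : ∀ q ∈ Q, ¬ r q q)
    (htr : ∀ a ∈ Q, ∀ b ∈ Q, ∀ c ∈ Q, r a b → r b c → r a c)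
    (htot : ∀ a ∈ Q, ∀ b ∈ Q, a ≠ b → r a b ∨ r b a)
    (s : Finset I) (hs : s ⊆ Q) (hne : s.Nonempty) :
    ∃ q ∈ s, ∀ x ∈ s, x ≠ q → r x q := by
  obtain ⟨q, hq, hmax⟩ := s.exists_max_image (fun x => (Q.filter (fun z => r z x)).card) hne
  refine ⟨q, hq, fun x hx hxq => ?_⟩
  rcases htot x (hs hx) q (hs hq) hxq with h | h
  · exact h
  · exact absurd (height_lt Q r hirr htr q x (hs hq) (hs hx) h)
      (not_lt.2 (hmax x hx))

theorem exists_rmin (hirr : ∀ q ∈ Q, ¬ r q q)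
    (htr : ∀ a ∈ Q, ∀ b ∈ Q, ∀ c ∈ Q, r a b → r b c → r a c)
    (htot : ∀ a ∈ Q, ∀ b ∈ Q, a ≠ b → r a b ∨ r b a)
    (s : Finset I) (hs : s ⊆ Q) (hne : s.Nonempty) :
    ∃ q ∈ s, ∀ x ∈ s, x ≠ q → r q x := by
  obtain ⟨q, hq, hmin⟩ := s.exists_min_image (fun x => (Q.filter (fun z => r z x)).card) hne
  refine ⟨q, hq, fun x hx hxq => ?_⟩
  rcases htot x (hs hx) q (hs hq) hxq with h | h
  · exact absurd (height_lt Q r hirr htr x q (hs hx) (hs hq) h)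
      (not_lt.2 (hmin x hx))
  · exact h

end ord

set_option maxHeartbeats 2000000 in
theorem simplification_exists {I : Type} [Fintype I] [DecidableEq I] {F : I → Type}
    [∀ i, Fintype (F i)] [∀ i, DecidableEq (F i)] [∀ i, Nonempty (F i)]
    (P : (∀ i, F i) → ℝ) (hpos : ∀ ω, 0 < P ω) (hsum : ∑ ω, P ω = 1)
    {n m : ℕ} (V : Fin n → I) (hV : Function.Injective V)
    (U : Fin m → I) (hU : Function.Injective U)
    (hVU : ∀ i k, V i ≠ U k)
    (j : Fin n) (D : Finset I)
    (hDV : ∀ i : Fin n, i ≤ j → V i ∉ D) (hDU : ∀ k, U k ∉ D)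
    (C : Fin n → Finset I) (hC : ∀ i, V i ∉ C i)
    (E : Fin m → Finset I) (hE : ∀ k, U k ∉ E k)
    (h1 : ∀ i : Fin n, j < i → V j ∉ C i)
    (h2 : ∀ ω, (∏ k, condP P {U k} (E k) ω) *
        (∏ i ∈ univ.filter (· ≤ j), condP P {V i} (C i) ω) =
      condP P ((univ.filter (· ≤ j)).image V ∪ univ.image U) D ω)
    (h3 : ∀ k, condIndep P (V j) (U k) (E k \ {V j}))
    -- (iv): a strict total order on Q = {V_1, ..., V_j} ∪ {U_1, ..., U_m}
    (r : I → I → Prop)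
    (hr_irrefl : ∀ q ∈ (univ.filter (· ≤ j)).image V ∪ univ.image U, ¬ r q q)
    (hr_trans : ∀ a ∈ (univ.filter (· ≤ j)).image V ∪ univ.image U,
      ∀ b ∈ (univ.filter (· ≤ j)).image V ∪ univ.image U,
      ∀ c ∈ (univ.filter (· ≤ j)).image V ∪ univ.image U, r a b → r b c → r a c)
    (hr_total : ∀ a ∈ (univ.filter (· ≤ j)).image V ∪ univ.image U,
      ∀ b ∈ (univ.filter (· ≤ j)).image V ∪ univ.image U, a ≠ b → r a b ∨ r b a)
    -- the restriction of `r` to the V's is V_j ≺ V_{j-1} ≺ ⋯ ≺ V_1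
    (hrV : ∀ a b : Fin n, a ≤ j → b < a → r (V a) (V b))
    -- V_j is the minimum of Q
    (hrmin : ∀ q ∈ (univ.filter (· ≤ j)).image V ∪ univ.image U, q ≠ V j → r (V j) q)
    -- C_i ⊆ {q ∈ Q : q ≺ V_i} ∪ D for i ≤ j
    (hCQ : ∀ i : Fin n, i ≤ j → ∀ x ∈ C i,
      x ∈ D ∨ (x ∈ (univ.filter (· ≤ j)).image V ∪ univ.image U ∧ r x (V i)))
    -- E_k ⊆ {q ∈ Q : q ≺ U_k} ∪ D for all k
    (hEQ : ∀ k : Fin m, ∀ x ∈ E k,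
      x ∈ D ∨ (x ∈ (univ.filter (· ≤ j)).image V ∪ univ.image U ∧ r x (U k))) :
    ∃ Dset : Fin n → Finset I,
      (∀ i : Fin n, i < j →
        Dset i ⊆ (univ.filter (· < j)).image V ∪ univ.image U ∪ D ∧
        V i ∉ Dset i ∧ V j ∉ Dset i) ∧
      ∀ ω, (∑ v : F (V j), ∏ i, condP P {V i} (C i) (Function.update ω (V j) v)) =
        (∏ i ∈ univ.filter (fun i => j < i), condP P {V i} (C i) ω) *
          (∏ i ∈ univ.filter (· < j), condP P {V i} (Dset i) ω) := by
  classical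
  set Qb : Finset I := (univ.filter (· ≤ j)).image V ∪ univ.image U with hQbdef
  set Q' : Finset I := (univ.filter (· < j)).image V ∪ univ.image U with hQ'def
  -- basic membership facts
  have hVQ' : ∀ i : Fin n, i < j → V i ∈ Q' := by
    intro i hi
    exact mem_union_left _ (mem_image_of_mem V (by simp [hi]))
  have hUQ' : ∀ k, U k ∈ Q' := fun k => mem_union_right _ (mem_image_of_mem U (mem_univ k))
  have hQ'mem : ∀ x ∈ Q', (∃ i : Fin n, i < j ∧ V i = x) ∨ (∃ k, U k = x) := by
    intro x hx
    rcases mem_union.1 hx with hx | hx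
    · obtain ⟨i, hi, rfl⟩ := mem_image.1 hx
      exact Or.inl ⟨i, by simpa using hi, rfl⟩
    · obtain ⟨k, _, rfl⟩ := mem_image.1 hx
      exact Or.inr ⟨k, rfl⟩
  have hVjQ' : V j ∉ Q' := by
    intro hx
    rcases hQ'mem _ hx with ⟨i, hi, he⟩ | ⟨k, he⟩
    · exact absurd (hV he) (ne_of_lt hi)
    · exact hVU j k he.symm
  have hQ'sub : Q' ⊆ Qb := by
    intro x hx
    rcases mem_union.1 hx with hx | hx
    · obtain ⟨i, hi, rfl⟩ := mem_image.1 hx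
      exact mem_union_left _ (mem_image_of_mem V (by simp at hi ⊢; exact le_of_lt hi))
    · exact mem_union_right _ hx
  have hVjQb : V j ∈ Qb := mem_union_left _ (mem_image_of_mem V (by simp))
  have hQins : Qb = insert (V j) Q' := by
    ext x
    constructor
    · intro hx
      rcases mem_union.1 hx with hx | hx
      · obtain ⟨i, hi, rfl⟩ := mem_image.1 hx
        simp only [mem_filter, mem_univ, true_and] at hi
        rcases lt_or_eq_of_le hi with hlt | he
        · exact mem_insert_of_mem (hVQ' i hlt)
        · exact he ▸ mem_insert_self _ _
      · exact mem_insert_of_mem (mem_union_right _ hx)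
    · intro hx
      rcases mem_insert.1 hx with rfl | hx
      · exact hVjQb
      · exact hQ'sub hx
  have hQ'D : ∀ x ∈ Q', x ∉ D := by
    intro x hx
    rcases hQ'mem _ hx with ⟨i, hi, rfl⟩ | ⟨k, rfl⟩
    · exact hDV i (le_of_lt hi)
    · exact hDU k
  have hVjD : V j ∉ D := hDV j le_rfl
  have hCjD : ∀ x ∈ C j, x ∈ D := by
    intro x hx
    rcases hCQ j le_rfl x hx with hx' | ⟨hxQ, hxr⟩
    · exact hx'
    · by_cases hxj : x = V j
      · exact absurd (hxj ▸ hx) (hC j)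
      · exact absurd (hr_trans _ hxQ _ hVjQb _ hxQ hxr (hrmin x hxQ hxj))
          (hr_irrefl x hxQ)
  have hCQ' : ∀ i : Fin n, i < j → ∀ x ∈ C i, x ∈ D ∨ x = V j ∨ (x ∈ Q' ∧ r x (V i)) := by
    intro i hi x hx
    rcases hCQ i (le_of_lt hi) x hx with hx' | ⟨hxQ, hxr⟩
    · exact Or.inl hx'
    · rw [hQins, mem_insert] at hxQ
      rcases hxQ with rfl | hxQ
      · exact Or.inr (Or.inl rfl)
      · exact Or.inr (Or.inr ⟨hxQ, hxr⟩)
  have hEQ' : ∀ k, ∀ x ∈ E k, x ∈ D ∨ x = V j ∨ (x ∈ Q' ∧ r x (U k)) := by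
    intro k x hx
    rcases hEQ k x hx with hx' | ⟨hxQ, hxr⟩
    · exact Or.inl hx'
    · rw [hQins, mem_insert] at hxQ
      rcases hxQ with rfl | hxQ
      · exact Or.inr (Or.inl rfl)
      · exact Or.inr (Or.inr ⟨hxQ, hxr⟩)
  -- dropping V j from the E's
  have hEdrop : ∀ k ω', condP P {U k} (E k) ω' = condP P {U k} (E k \ {V j}) ω' := by
    intro k ω'
    by_cases hj : V j ∈ E k
    · have he : E k = insert (V j) (E k \ {V j}) := by
        ext x; by_cases hxj : x = V j <;> simp [hxj, hj]
      conv_lhs => rw [he]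
      exact condP_drop P hpos (h3 k) (hVU j k) ω'
    · rw [sdiff_eq_self_of_disjoint (by simp [hj])]
  have hfU : univ.filter (fun k => U k ∈ Q') = univ :=
    filter_true_of_mem fun k _ => hUQ' k
  have hfV : univ.filter (fun i => i = j ∨ V i ∈ Q') = univ.filter (· ≤ j) := by
    apply filter_congr
    intro i _
    constructor
    · rintro (rfl | h)
      · exact le_rfl
      · rcases hQ'mem _ h with ⟨i', hi', he⟩ | ⟨k, he⟩
        · exact le_of_lt (hV he ▸ hi')
        · exact absurd he.symm (hVU i k)
    · intro h
      rcases lt_or_eq_of_le h with h' | h'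
      · exact Or.inr (hVQ' i h')
      · exact Or.inl h'
  -- base case of Lemma A
  have base : ∀ ω, marg P (D ∪ Q') ω = marg P D ω *
      ((∏ k ∈ univ.filter (fun k => U k ∈ Q'), condP P {U k} (E k \ {V j}) ω) *
       (∑ v : F (V j), ∏ i ∈ univ.filter (fun i => i = j ∨ V i ∈ Q'),
          condP P {V i} (C i) (Function.update ω (V j) v))) := by
    intro ω
    have key : ∀ v : F (V j),
        (∏ k, condP P {U k} (E k \ {V j}) ω) *
          (∏ i ∈ univ.filter (· ≤ j), condP P {V i} (C i) (Function.update ω (V j) v))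
        = condP P Qb D (Function.update ω (V j) v) := by
      intro v
      rw [← h2 (Function.update ω (V j) v)]
      congr 1
      refine Finset.prod_congr rfl fun k _ => ?_
      rw [hEdrop k, condP_update P (by simp) (by simp only [mem_singleton]; exact hVU j k)]
    have hDQb : D ∪ Qb = insert (V j) (D ∪ Q') := by rw [hQins, union_insert]
    have hVjDQ' : V j ∉ D ∪ Q' := by simp [hVjD, hVjQ']
    have hsplit : ∑ v : F (V j), condP P Qb D (Function.update ω (V j) v)
        = marg P (D ∪ Q') ω / marg P D ω := by
      unfold condP
      calc ∑ v : F (V j), marg P (D ∪ Qb) (Function.update ω (V j) v) /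
            marg P D (Function.update ω (V j) v)
          = ∑ v : F (V j), marg P (insert (V j) (D ∪ Q')) (Function.update ω (V j) v) /
            marg P D ω := by
            refine Finset.sum_congr rfl fun v _ => ?_
            rw [hDQb, marg_update P hVjD]
        _ = marg P (D ∪ Q') ω / marg P D ω := by
            rw [← Finset.sum_div, sum_marg P hVjDQ']
    have hbig : (∏ k, condP P {U k} (E k \ {V j}) ω) *
          (∑ v : F (V j), ∏ i ∈ univ.filter (· ≤ j),
            condP P {V i} (C i) (Function.update ω (V j) v))
        = marg P (D ∪ Q') ω / marg P D ω := by
      rw [Finset.mul_sum]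
      exact (Finset.sum_congr rfl fun v _ => key v).trans hsplit
    rw [hfU, hfV, hbig, mul_div_assoc', mul_comm, mul_div_assoc,
      div_self (marg_pos P hpos D ω).ne', mul_one]
  -- the down-set factorization (Lemma A)
  have LemA : ∀ N : ℕ, ∀ R : Finset I, R ⊆ Q' →
      (∀ x ∈ R, ∀ y ∈ Q', r y x → y ∈ R) → (Q' \ R).card ≤ N → ∀ ω,
      marg P (D ∪ R) ω = marg P D ω *
        ((∏ k ∈ univ.filter (fun k => U k ∈ R), condP P {U k} (E k \ {V j}) ω) *
         (∑ v : F (V j), ∏ i ∈ univ.filter (fun i => i = j ∨ V i ∈ R),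
            condP P {V i} (C i) (Function.update ω (V j) v))) := by
    intro N
    induction N with
    | zero =>
      intro R hsub hdown hcard ω
      have hR : R = Q' := Subset.antisymm hsub
        (sdiff_eq_empty_iff_subset.1 (card_eq_zero.1 (Nat.le_zero.1 hcard)))
      subst hR
      exact base ω
    | succ N ih =>
      intro R hsub hdown hcard ω
      by_cases hcard' : (Q' \ R).card ≤ N
      · exact ih R hsub hdown hcard' ω
      have hne : (Q' \ R).Nonempty := by
        rw [nonempty_iff_ne_empty]
        intro h
        rw [h] at hcard'
        simp at hcard'
      obtain ⟨q, hq, hqmin⟩ := exists_rmin Qb r hr_irrefl hr_trans hr_total (Q' \ R)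
        (sdiff_subset.trans hQ'sub) hne
      have hqQ' : q ∈ Q' := (mem_sdiff.1 hq).1
      have hqQb : q ∈ Qb := hQ'sub hqQ'
      have hqR : q ∉ R := (mem_sdiff.1 hq).2
      have hqD : q ∉ D := hQ'D q hqQ'
      have hqVj : q ≠ V j := fun h => hVjQ' (h ▸ hqQ')
      have hsub' : insert q R ⊆ Q' := insert_subset hqQ' hsub
      have hdown' : ∀ x ∈ insert q R, ∀ y ∈ Q', r y x → y ∈ insert q R := by
        intro x hx y hy hyx
        rcases mem_insert.1 hx with rfl | hxR
        · by_cases hyR : y ∈ R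
          · exact mem_insert_of_mem hyR
          · by_cases hyq : y = x
            · exact hyq ▸ mem_insert_self _ _
            · exact absurd
                (hr_trans y (hQ'sub hy) x hqQb y (hQ'sub hy) hyx
                  (hqmin y (mem_sdiff.2 ⟨hy, hyR⟩) hyq))
                (hr_irrefl y (hQ'sub hy))
        · exact mem_insert_of_mem (hdown x hxR y hy hyx)
      have hcard'' : (Q' \ insert q R).card ≤ N := by
        have h1 : Q' \ insert q R = (Q' \ R).erase q := by
          ext x
          simp only [mem_sdiff, mem_insert, mem_erase]
          tauto
        rw [h1, card_erase_of_mem hq]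
        omega
      have IH := ih (insert q R) hsub' hdown' hcard''
      -- q is not in any relevant conditioning set
      have hqE : ∀ k', U k' ∈ R → q ∉ E k' \ {V j} := by
        intro k' hk' hmem
        rw [mem_sdiff] at hmem
        rcases hEQ' k' q hmem.1 with h | h | ⟨_, hr'⟩
        · exact hqD h
        · exact hmem.2 (by simp [h])
        · exact hqR (hdown (U k') hk' q hqQ' hr')
      have hqC : ∀ i : Fin n, (i = j ∨ V i ∈ R) → q ∉ C i := by
        intro i hi hmem
        rcases hi with rfl | hVi
        · exact hqD (hCjD q hmem)
        · have hij : i < j := by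
            rcases hQ'mem _ (hsub hVi) with ⟨i', hi', he⟩ | ⟨k', he⟩
            · exact hV he ▸ hi'
            · exact absurd he.symm (hVU i k')
          rcases hCQ' i hij q hmem with h | h | ⟨_, hr'⟩
          · exact hqD h
          · exact hqVj h
          · exact hqR (hdown (V i) hVi q hqQ' hr')
      have hUkR : ∀ k', U k' ∈ R → q ≠ U k' := fun k' h he => hqR (he ▸ h)
      have hViq : ∀ i : Fin n, (i = j ∨ V i ∈ R) → q ∉ ({V i} : Finset I) := by
        intro i hi
        simp only [mem_singleton]
        rintro rfl
        rcases hi with rfl | hVi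
        · exact hqVj rfl
        · exact hqR hVi
      have hqDR : q ∉ D ∪ R := by simp [hqD, hqR]
      have hDins : D ∪ insert q R = insert q (D ∪ R) := union_insert q D R
      -- the A-factor is invariant under updates at q (for k' with U k' ∈ R)
      have hAinv : ∀ (ω' : ∀ i', F i') (w : F q),
          ∀ k' ∈ univ.filter (fun k' => U k' ∈ R),
          condP P {U k'} (E k' \ {V j}) (Function.update ω' q w)
            = condP P {U k'} (E k' \ {V j}) ω' := by
        intro ω' w k' hk'
        rw [mem_filter] at hk'
        exact condP_update P (hqE k' hk'.2) (by simp [hUkR k' hk'.2]) ω' w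
      -- the V-factors for i ∈ filter are invariant under updates at q
      have hVinv : ∀ (ω' : ∀ i', F i') (w : F q),
          ∀ i ∈ univ.filter (fun i => i = j ∨ V i ∈ R),
          condP P {V i} (C i) (Function.update ω' q w)
            = condP P {V i} (C i) ω' := by
        intro ω' w i hi
        rw [mem_filter] at hi
        exact condP_update P (hqC i hi.2) (hViq i hi.2) ω' w
      -- start the computation
      have hstart : marg P (D ∪ R) ω
          = ∑ w : F q, marg P D ω *
            ((∏ k' ∈ univ.filter (fun k' => U k' ∈ insert q R),
              condP P {U k'} (E k' \ {V j}) (Function.update ω q w)) *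
             (∑ v : F (V j), ∏ i ∈ univ.filter (fun i => i = j ∨ V i ∈ insert q R),
              condP P {V i} (C i)
                (Function.update (Function.update ω q w) (V j) v))) := by
        rw [← sum_marg P hqDR ω]
        refine Finset.sum_congr rfl fun w _ => ?_
        rw [← hDins, IH, marg_update P hqD]
      rcases hQ'mem q hqQ' with ⟨i0, hi0j, rfl⟩ | ⟨k0, rfl⟩
      · -- q = V i0 with i0 < j
        have hAfilt : univ.filter (fun k' => U k' ∈ insert (V i0) R)
            = univ.filter (fun k' => U k' ∈ R) := by
          apply filter_congr
          intro k' _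
          constructor
          · intro h
            rcases mem_insert.1 h with h' | h'
            · exact absurd h'.symm (hVU i0 k')
            · exact h'
          · exact fun h => mem_insert_of_mem h
        have hi0ni : i0 ∉ univ.filter (fun i => i = j ∨ V i ∈ R) := by
          simp only [mem_filter, mem_univ, true_and, not_or]
          exact ⟨fun h => hqVj (by rw [h]), hqR⟩
        have hHfilt : univ.filter (fun i => i = j ∨ V i ∈ insert (V i0) R)
            = insert i0 (univ.filter (fun i => i = j ∨ V i ∈ R)) := by
          ext i
          simp only [mem_filter, mem_univ, true_and, mem_insert, hV.eq_iff]
          tauto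
        rw [hstart]
        have key1 : ∀ w : F (V i0),
            marg P D ω * ((∏ k' ∈ univ.filter (fun k' => U k' ∈ insert (V i0) R),
                condP P {U k'} (E k' \ {V j}) (Function.update ω (V i0) w)) *
              (∑ v : F (V j), ∏ i ∈ univ.filter (fun i => i = j ∨ V i ∈ insert (V i0) R),
                condP P {V i} (C i)
                  (Function.update (Function.update ω (V i0) w) (V j) v)))
            = marg P D ω * ((∏ k' ∈ univ.filter (fun k' => U k' ∈ R),
                condP P {U k'} (E k' \ {V j}) ω) *
              (∑ v : F (V j),
                condP P {V i0} (C i0)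
                  (Function.update (Function.update ω (V j) v) (V i0) w) *
                ∏ i ∈ univ.filter (fun i => i = j ∨ V i ∈ R),
                  condP P {V i} (C i) (Function.update ω (V j) v))) := by
          intro w
          rw [hAfilt, Finset.prod_congr rfl (hAinv ω w), hHfilt]
          congr 1
          congr 1
          refine Finset.sum_congr rfl fun v _ => ?_
          rw [prod_insert hi0ni, Function.update_comm hqVj]
          congr 1
          exact Finset.prod_congr rfl (hVinv (Function.update ω (V j) v) w)
        refine (Finset.sum_congr rfl fun w _ => key1 w).trans ?_
        rw [← Finset.mul_sum, ← Finset.mul_sum, Finset.sum_comm]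
        congr 1
        congr 1
        refine Finset.sum_congr rfl fun v _ => ?_
        rw [← Finset.sum_mul, sum_condP_one P hpos (hC i0) (Function.update ω (V j) v),
          one_mul]
      · -- q = U k0
        have hAfilt : univ.filter (fun k' => U k' ∈ insert (U k0) R)
            = insert k0 (univ.filter (fun k' => U k' ∈ R)) := by
          ext k'
          simp only [mem_filter, mem_univ, true_and, mem_insert, hU.eq_iff]
        have hk0ni : k0 ∉ univ.filter (fun k' => U k' ∈ R) := by
          simp only [mem_filter, mem_univ, true_and]
          exact hqR
        have hHfilt : univ.filter (fun i => i = j ∨ V i ∈ insert (U k0) R)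
            = univ.filter (fun i => i = j ∨ V i ∈ R) := by
          apply filter_congr
          intro i _
          constructor
          · rintro (h | h)
            · exact Or.inl h
            · rcases mem_insert.1 h with h' | h'
              · exact absurd h' (hVU i k0)
              · exact Or.inr h'
          · rintro (h | h)
            · exact Or.inl h
            · exact Or.inr (mem_insert_of_mem h)
        have hUE : U k0 ∉ E k0 \ {V j} := fun h => hE k0 (mem_sdiff.1 h).1
        rw [hstart]
        have key1 : ∀ w : F (U k0),
            marg P D ω * ((∏ k' ∈ univ.filter (fun k' => U k' ∈ insert (U k0) R),
                condP P {U k'} (E k' \ {V j}) (Function.update ω (U k0) w)) *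
              (∑ v : F (V j), ∏ i ∈ univ.filter (fun i => i = j ∨ V i ∈ insert (U k0) R),
                condP P {V i} (C i)
                  (Function.update (Function.update ω (U k0) w) (V j) v)))
            = (marg P D ω * ((∏ k' ∈ univ.filter (fun k' => U k' ∈ R),
                condP P {U k'} (E k' \ {V j}) ω) *
              (∑ v : F (V j), ∏ i ∈ univ.filter (fun i => i = j ∨ V i ∈ R),
                condP P {V i} (C i) (Function.update ω (V j) v)))) *
              condP P {U k0} (E k0 \ {V j}) (Function.update ω (U k0) w) := by
          intro w
          rw [hAfilt, prod_insert hk0ni, Finset.prod_congr rfl (hAinv ω w), hHfilt]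
          have hsum : (∑ v : F (V j), ∏ i ∈ univ.filter (fun i => i = j ∨ V i ∈ R),
              condP P {V i} (C i)
                (Function.update (Function.update ω (U k0) w) (V j) v))
              = ∑ v : F (V j), ∏ i ∈ univ.filter (fun i => i = j ∨ V i ∈ R),
                condP P {V i} (C i) (Function.update ω (V j) v) := by
            refine Finset.sum_congr rfl fun v _ => ?_
            rw [Function.update_comm hqVj]
            exact Finset.prod_congr rfl (hVinv (Function.update ω (V j) v) w)
          rw [hsum]
          ring
        refine (Finset.sum_congr rfl fun w _ => key1 w).trans ?_
        rw [← Finset.mul_sum, sum_condP_one P hpos hUE ω, mul_one]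
  -- the chain rule (Lemma B)
  have LemB : ∀ N : ℕ, ∀ R : Finset I, R ⊆ Q' →
      (∀ x ∈ R, ∀ y ∈ Q', r y x → y ∈ R) → R.card ≤ N → ∀ ω,
      marg P (D ∪ R) ω = marg P D ω *
        ∏ q ∈ R, condP P {q} (D ∪ Q'.filter (fun x => r x q)) ω := by
    intro N
    induction N with
    | zero =>
      intro R hsub hdown hcard ω
      have hR : R = ∅ := card_eq_zero.1 (Nat.le_zero.1 hcard)
      subst hR
      simp
    | succ N ih =>
      intro R hsub hdown hcard ω
      rcases eq_empty_or_nonempty R with rfl | hne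
      · simp
      obtain ⟨q, hqR, hqmax⟩ := exists_rmax Qb r hr_irrefl hr_trans hr_total R
        (hsub.trans hQ'sub) hne
      have hqQ' : q ∈ Q' := hsub hqR
      have herased : ∀ x ∈ R.erase q, ∀ y ∈ Q', r y x → y ∈ R.erase q := by
        intro x hx y hy hyx
        have hxR := mem_of_mem_erase hx
        have hyR := hdown x hxR y hy hyx
        refine mem_erase.2 ⟨?_, hyR⟩
        rintro rfl
        have hxq : x ≠ y := (mem_erase.1 hx).1
        exact hr_irrefl y (hQ'sub hqQ')
          (hr_trans y (hQ'sub hqQ') x (hQ'sub (hsub hxR)) y (hQ'sub hqQ') hyx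
            (hqmax x hxR hxq))
      have hfq : Q'.filter (fun x => r x q) = R.erase q := by
        ext x
        simp only [mem_filter, mem_erase]
        constructor
        · rintro ⟨hxQ', hxq⟩
          have hxR : x ∈ R := hdown q hqR x hxQ' hxq
          exact ⟨fun h => hr_irrefl q (hQ'sub hqQ') (h ▸ hxq), hxR⟩
        · rintro ⟨hxq, hxR⟩
          exact ⟨hsub hxR, hqmax x hxR hxq⟩
      have hQD : D ∪ R = insert q (D ∪ R.erase q) := by
        conv_lhs => rw [← insert_erase hqR]
        rw [union_insert]
      have hcard' : (R.erase q).card ≤ N := by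
        rw [card_erase_of_mem hqR]
        omega
      rw [hQD, marg_insert_eq P hpos,
        ih (R.erase q) (fun x hx => hsub (mem_of_mem_erase hx)) herased hcard',
        ← Finset.mul_prod_erase R _ hqR, hfq]
      ring
  -- local Markov property for the U's
  have ML : ∀ k ω, condP P {U k} (D ∪ Q'.filter (fun x => r x (U k))) ω
      = condP P {U k} (E k \ {V j}) ω := by
    intro k ω
    have hUkQ' : U k ∈ Q' := hUQ' k
    have hUkQb : U k ∈ Qb := hQ'sub hUkQ'
    have hdown1 : ∀ x ∈ Q'.filter (fun x => r x (U k) ∨ x = U k), ∀ y ∈ Q',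
        r y x → y ∈ Q'.filter (fun x => r x (U k) ∨ x = U k) := by
      intro x hx y hy hyx
      rw [mem_filter] at hx ⊢
      refine ⟨hy, Or.inl ?_⟩
      rcases hx.2 with h | rfl
      · exact hr_trans y (hQ'sub hy) x (hQ'sub hx.1) (U k) hUkQb hyx h
      · exact hyx
    have hdown0 : ∀ x ∈ Q'.filter (fun x => r x (U k)), ∀ y ∈ Q',
        r y x → y ∈ Q'.filter (fun x => r x (U k)) := by
      intro x hx y hy hyx
      rw [mem_filter] at hx ⊢
      exact ⟨hy, hr_trans y (hQ'sub hy) x (hQ'sub hx.1) (U k) hUkQb hyx hx.2⟩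
    have hR : Q'.filter (fun x => r x (U k) ∨ x = U k)
        = insert (U k) (Q'.filter (fun x => r x (U k))) := by
      ext x
      simp only [mem_filter, mem_insert]
      constructor
      · rintro ⟨hxQ', h | rfl⟩
        · exact Or.inr ⟨hxQ', h⟩
        · exact Or.inl rfl
      · rintro (rfl | ⟨hxQ', h⟩)
        · exact ⟨hUkQ', Or.inr rfl⟩
        · exact ⟨hxQ', Or.inl h⟩
    have hUknR0 : U k ∉ Q'.filter (fun x => r x (U k)) := by
      simp [hr_irrefl _ hUkQb]
    have e1 := LemA (Q' \ Q'.filter (fun x => r x (U k) ∨ x = U k)).card _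
      (filter_subset _ _) hdown1 le_rfl ω
    have e0 := LemA (Q' \ Q'.filter (fun x => r x (U k))).card _
      (filter_subset _ _) hdown0 le_rfl ω
    have hfiltU : univ.filter (fun k' => U k' ∈ Q'.filter (fun x => r x (U k) ∨ x = U k))
        = insert k (univ.filter (fun k' => U k' ∈ Q'.filter (fun x => r x (U k)))) := by
      ext k'
      simp only [mem_filter, mem_univ, true_and, mem_insert, hR, hU.eq_iff]
    have hkni : k ∉ univ.filter (fun k' => U k' ∈ Q'.filter (fun x => r x (U k))) := by
      simp only [mem_filter, mem_univ, true_and, not_and]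
      exact fun _ => hr_irrefl _ hUkQb
    have hfiltV : univ.filter (fun i => i = j ∨ V i ∈ Q'.filter (fun x => r x (U k) ∨ x = U k))
        = univ.filter (fun i => i = j ∨ V i ∈ Q'.filter (fun x => r x (U k))) := by
      apply filter_congr
      intro i _
      simp only [hR, mem_insert, eq_iff_iff]
      constructor
      · rintro (h | h | h)
        · exact Or.inl h
        · exact absurd h (hVU i k)
        · exact Or.inr h
      · rintro (h | h)
        · exact Or.inl h
        · exact Or.inr (Or.inr h)
    rw [hfiltU, prod_insert hkni, hfiltV] at e1
    have hDR : D ∪ Q'.filter (fun x => r x (U k) ∨ x = U k)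
        = insert (U k) (D ∪ Q'.filter (fun x => r x (U k))) := by
      rw [hR, union_insert]
    rw [hDR, marg_insert_eq P hpos, e0] at e1
    have hApos : 0 < ∏ k' ∈ univ.filter (fun k' => U k' ∈ Q'.filter (fun x => r x (U k))),
        condP P {U k'} (E k' \ {V j}) ω :=
      Finset.prod_pos fun k' _ => condP_pos P hpos _ _ ω
    have hHpos : 0 < ∑ v : F (V j), ∏ i ∈ univ.filter
        (fun i => i = j ∨ V i ∈ Q'.filter (fun x => r x (U k))),
        condP P {V i} (C i) (Function.update ω (V j) v) :=
      Finset.sum_pos (fun v _ => Finset.prod_pos fun i _ => condP_pos P hpos _ _ _)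
        univ_nonempty
    have hX : marg P D ω * (∏ k' ∈ univ.filter (fun k' => U k' ∈ Q'.filter (fun x => r x (U k))),
        condP P {U k'} (E k' \ {V j}) ω) * (∑ v : F (V j), ∏ i ∈ univ.filter
        (fun i => i = j ∨ V i ∈ Q'.filter (fun x => r x (U k))),
        condP P {V i} (C i) (Function.update ω (V j) v)) ≠ 0 :=
      (mul_pos (mul_pos (marg_pos P hpos D ω) hApos) hHpos).ne'
    apply mul_right_cancel₀ hX
    linear_combination e1
  -- assembly
  refine ⟨fun i => D ∪ Q'.filter (fun x => r x (V i)), ?_, ?_⟩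
  · intro i hi
    refine ⟨?_, ?_, ?_⟩
    · intro x hx
      rcases mem_union.1 hx with hx | hx
      · exact mem_union_right _ hx
      · exact mem_union_left _ (filter_subset _ _ hx)
    · simp only [mem_union, mem_filter]
      rintro (hx | ⟨hx, hr⟩)
      · exact hDV i (le_of_lt hi) hx
      · exact hr_irrefl _ (hQ'sub hx) hr
    · simp only [mem_union, mem_filter]
      rintro (hx | ⟨hx, _⟩)
      · exact hVjD hx
      · exact hVjQ' hx
  · intro ω
    have hfgt : univ.filter (fun i : Fin n => ¬ i ≤ j) = univ.filter (fun i => j < i) :=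
      filter_congr fun i _ => by rw [not_le]
    have hsplit1 : ∀ v : F (V j),
        (∏ i, condP P {V i} (C i) (Function.update ω (V j) v))
        = (∏ i ∈ univ.filter (· ≤ j), condP P {V i} (C i) (Function.update ω (V j) v)) *
          ∏ i ∈ univ.filter (fun i => j < i), condP P {V i} (C i) ω := by
      intro v
      rw [← Finset.prod_filter_mul_prod_filter_not univ (· ≤ j), hfgt]
      congr 1
      refine Finset.prod_congr rfl fun i hi => ?_
      rw [mem_filter] at hi
      refine condP_update P (h1 i hi.2) ?_ ω v
      simp only [mem_singleton, hV.eq_iff]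
      exact ne_of_lt hi.2
    have eA := LemA (Q' \ Q').card Q' Subset.rfl (fun x _ y hy _ => hy) le_rfl ω
    have eB := LemB Q'.card Q' Subset.rfl (fun x _ y hy _ => hy) le_rfl ω
    rw [hfU, hfV] at eA
    -- split the product in eB
    have hdisj : Disjoint ((univ.filter (· < j)).image V) (univ.image U) := by
      rw [disjoint_left]
      intro a ha hb
      obtain ⟨i, _, rfl⟩ := mem_image.1 ha
      obtain ⟨k, _, he⟩ := mem_image.1 hb
      exact hVU i k he.symm
    have hprodQ' : (∏ q ∈ Q', condP P {q} (D ∪ Q'.filter (fun x => r x q)) ω)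
        = (∏ i ∈ univ.filter (· < j),
            condP P {V i} (D ∪ Q'.filter (fun x => r x (V i))) ω) *
          ∏ k, condP P {U k} (E k \ {V j}) ω := by
      rw [hQ'def, prod_union hdisj, Finset.prod_image (fun x _ y _ h => hV h),
        Finset.prod_image (fun x _ y _ h => hU h)]
      congr 1
      exact Finset.prod_congr rfl fun k _ => ML k ω
    rw [hprodQ'] at eB
    have hApos : 0 < ∏ k, condP P {U k} (E k \ {V j}) ω :=
      Finset.prod_pos fun k _ => condP_pos P hpos _ _ ω
    have hkey : (∑ v : F (V j), ∏ i ∈ univ.filter (· ≤ j),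
          condP P {V i} (C i) (Function.update ω (V j) v))
        = ∏ i ∈ univ.filter (· < j),
            condP P {V i} (D ∪ Q'.filter (fun x => r x (V i))) ω := by
      have h0 := eA.symm.trans eB
      have h1' := mul_left_cancel₀ (marg_pos P hpos D ω).ne' h0
      rw [mul_comm (∏ i ∈ univ.filter (· < j),
        condP P {V i} (D ∪ Q'.filter (fun x => r x (V i))) ω)] at h1'
      exact mul_left_cancel₀ hApos.ne' h1'
    calc ∑ v : F (V j), ∏ i, condP P {V i} (C i) (Function.update ω (V j) v)
        = ∑ v : F (V j), (∏ i ∈ univ.filter (· ≤ j),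
            condP P {V i} (C i) (Function.update ω (V j) v)) *
          ∏ i ∈ univ.filter (fun i => j < i), condP P {V i} (C i) ω :=
          Finset.sum_congr rfl fun v _ => hsplit1 v
      _ = (∑ v : F (V j), ∏ i ∈ univ.filter (· ≤ j),
            condP P {V i} (C i) (Function.update ω (V j) v)) *
          ∏ i ∈ univ.filter (fun i => j < i), condP P {V i} (C i) ω := by
          rw [← Finset.sum_mul]
      _ = _ := by rw [hkey, mul_comm]
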